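/- For every p ∈ (2,q] and every M > 0 there exists C > 0 such that the following holds. Let u₁, u₂ ∈ W^{1,p}(Ω;ℝ²) with ‖u₁‖_{W^{1,p}}, ‖u₂‖_{W^{1,p}} ≤ M, let v₀ ∈ 𝒱 with 0 ≤ v₀ ≤ 1, and let v_i := argmin{ℱ(u_i, v) : v ∈ 𝒱, v ≤ v₀} for i = 1,2. Then ‖v₁ − v₂‖_{H¹(Ω)} ≤ C ‖u₁ − u₂‖_{H¹(Ω;ℝ²)}. -/

import Mathlib

open MeasureTheory Filter Topology
open scoped RealInnerProductSpace

noncomputable section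

/-- Points of the plane `ℝ²`. -/
abbrev Pt : Type := EuclideanSpace ℝ (Fin 2)

/-- Real `2 × 2` matrices (as functions). -/
abbrev Mat : Type := Fin 2 → Fin 2 → ℝ

/-- Trace of a `2 × 2` matrix. -/
def mtrace (M : Mat) : ℝ := M 0 0 + M 1 1

/-- The identity matrix. -/
def idm : Mat := fun i j => if i = j then (1 : ℝ) else 0

/-- Deviatoric part `ε_d = ε - ½ tr(ε) I`. -/
def dev (M : Mat) : Mat := fun i j => M i j - (mtrace M / 2) * idm i j

/-- Tensile volumetric part `ε_v⁺ = ½ tr⁺(ε) I`. -/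
def volP (M : Mat) : Mat := fun i j => (max (mtrace M) 0 / 2) * idm i j

/-- Compressive volumetric part `ε_v⁻ = ½ tr⁻(ε) I`. -/
def volM (M : Mat) : Mat := fun i j => (max (-(mtrace M)) 0 / 2) * idm i j

/-- Squared Frobenius norm. -/
def frobSq (M : Mat) : ℝ := ∑ i, ∑ j, (M i j) ^ 2

/-- Frobenius norm. -/
def frobNorm (M : Mat) : ℝ := Real.sqrt (frobSq M)

/-- Frobenius inner product `M : N`. -/
def matInner (M N : Mat) : ℝ := ∑ i, ∑ j, M i j * N i j

/-- The symmetric gradient `ε(u) = ½ (Du + Duᵀ)`. -/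
def symGrad (u : Pt → Pt) (x : Pt) : Mat := fun i j =>
  (fderiv ℝ u x (EuclideanSpace.single j 1) i + fderiv ℝ u x (EuclideanSpace.single i 1) j) / 2

/-- The setting of the phase-field model: `Ω ⊂ ℝ²` bounded, connected, open; a Dirichlet part
`∂_D Ω` of the boundary; material constants `μ, κ, η, G_c > 0`; the exponent `q > 2`; a loading
path `g(s) = α(s) ĝ` with `ĝ ∈ W^{1,q}(Ω;ℝ²)` and `α ∈ C¹([0,1])`. -/
structure PFSetting : Type where
  Ω : Set Pt
  DΩ : Set Pt
  μ : ℝ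
  κ : ℝ
  η : ℝ
  Gc : ℝ
  q : ℝ
  ghat : Pt → Pt
  α : ℝ → ℝ
  hΩopen : IsOpen Ω
  hΩbdd : Bornology.IsBounded Ω
  hΩconn : IsConnected Ω
  hDΩ : DΩ ⊆ frontier Ω
  hμ : 0 < μ
  hκ : 0 < κ
  hη : 0 < η
  hGc : 0 < Gc
  hq : 2 < q
  hα : ContDiffOn ℝ 1 α (Set.Icc 0 1)
  hghat_diff : ∀ x ∈ Ω, DifferentiableAt ℝ ghat x
  hghat_Lq : MemLp ghat (ENNReal.ofReal q) (volume.restrict Ω)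
  hghat_dLq : MemLp (fun x => ‖fderiv ℝ ghat x‖) (ENNReal.ofReal q) (volume.restrict Ω)

namespace PFSetting

variable (S : PFSetting)

/-- `W₊(ε) = μ|ε_d|² + κ|ε_v⁺|² (+ δ)`; the parameter `δ ≥ 0` is the modification of §5
(take `δ = 0` for the standard phase-field energy). -/
def Wplus (δ : ℝ) (M : Mat) : ℝ := S.μ * frobSq (dev M) + S.κ * frobSq (volP M) + δ

/-- `W₋(ε) = κ|ε_v⁻|²`. -/
def Wminus (M : Mat) : ℝ := S.κ * frobSq (volM M)

/-- Energy density `W(ε,v) = (v² + η) W₊(ε) + W₋(ε)`. -/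
def Wd (δ : ℝ) (M : Mat) (v : ℝ) : ℝ := (v ^ 2 + S.η) * S.Wplus δ M + S.Wminus M

/-- Elastic energy `ℰ(u,v) = ∫_Ω W(ε(u), v) dx`. -/
def E (δ : ℝ) (u : Pt → Pt) (v : Pt → ℝ) : ℝ := ∫ x in S.Ω, S.Wd δ (symGrad u x) (v x)

/-- Dissipation `ℒ(v) = ½ ∫_Ω (v-1)² + |∇v|² dx`  (the `AT₂` functional). -/
def L (v : Pt → ℝ) : ℝ := (1 / 2) * ∫ x in S.Ω, (v x - 1) ^ 2 + ‖gradient v x‖ ^ 2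

/-- Total energy `ℱ = ℰ + G_c ℒ`. -/
def F (δ : ℝ) (u : Pt → Pt) (v : Pt → ℝ) : ℝ := S.E δ u v + S.Gc * S.L v

/-- `v ∈ H¹(Ω)` (surrogate). -/
def MemH1 (v : Pt → ℝ) : Prop :=
  (∀ x ∈ S.Ω, DifferentiableAt ℝ v x) ∧
  MemLp v 2 (volume.restrict S.Ω) ∧
  MemLp (fun x => ‖gradient v x‖) 2 (volume.restrict S.Ω)

/-- `v ∈ 𝒱 = H¹(Ω) ∩ L^∞(Ω)`. -/
def MemV (v : Pt → ℝ) : Prop := S.MemH1 v ∧ ∃ C, ∀ x ∈ S.Ω, |v x| ≤ C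

/-- `u ∈ H¹(Ω;ℝ²)` (surrogate). -/
def MemH1v (u : Pt → Pt) : Prop :=
  (∀ x ∈ S.Ω, DifferentiableAt ℝ u x) ∧
  MemLp u 2 (volume.restrict S.Ω) ∧
  MemLp (fun x => ‖fderiv ℝ u x‖) 2 (volume.restrict S.Ω)

/-- `u ∈ W^{1,p}(Ω;ℝ²)` (surrogate). -/
def MemW1p (p : ℝ) (u : Pt → Pt) : Prop :=
  (∀ x ∈ S.Ω, DifferentiableAt ℝ u x) ∧
  MemLp u (ENNReal.ofReal p) (volume.restrict S.Ω) ∧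
  MemLp (fun x => ‖fderiv ℝ u x‖) (ENNReal.ofReal p) (volume.restrict S.Ω)

/-- `u ∈ 𝒰(s)`: `H¹` displacements with `u = α(s) ĝ` on `∂_D Ω`. -/
def MemU (s : ℝ) (u : Pt → Pt) : Prop :=
  S.MemH1v u ∧ ∀ x ∈ S.DΩ, u x = S.α s • S.ghat x

/-- `ξ ∈ Ξ`: admissible (nonpositive) phase-field variations. -/
def MemXi (ξ : Pt → ℝ) : Prop := S.MemV ξ ∧ ∀ x ∈ S.Ω, ξ x ≤ 0

/-- `φ ∈ Φ`: displacement variations vanishing on `∂_D Ω`. -/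
def MemPhi (φ : Pt → Pt) : Prop := S.MemH1v φ ∧ ∀ x ∈ S.DΩ, φ x = 0

/-- `H¹(Ω)` norm. -/
def H1norm (v : Pt → ℝ) : ℝ := Real.sqrt (∫ x in S.Ω, (v x) ^ 2 + ‖gradient v x‖ ^ 2)

/-- `H¹(Ω;ℝ²)` norm. -/
def H1normV (u : Pt → Pt) : ℝ := Real.sqrt (∫ x in S.Ω, ‖u x‖ ^ 2 + ‖fderiv ℝ u x‖ ^ 2)

/-- `W^{1,p}(Ω;ℝ²)` norm. -/
def W1pNorm (p : ℝ) (u : Pt → Pt) : ℝ :=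
  (∫ x in S.Ω, ‖u x‖ ^ p + ‖fderiv ℝ u x‖ ^ p) ^ (1 / p)

/-- `L^r(Ω)` norm. -/
def LrNorm (r : ℝ) (v : Pt → ℝ) : ℝ := (∫ x in S.Ω, |v x| ^ r) ^ (1 / r)

/-- `u ∈ argmin { ℰ(·,v) : 𝒰(s) }`. -/
def IsElMin (δ s : ℝ) (v : Pt → ℝ) (u : Pt → Pt) : Prop :=
  S.MemU s u ∧ ∀ w, S.MemU s w → S.E δ u v ≤ S.E δ w v

/-- `u ∈ argmin { ℱ(·,v) : 𝒰(s) }`. -/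
def IsUMin (δ s : ℝ) (v : Pt → ℝ) (u : Pt → Pt) : Prop :=
  S.MemU s u ∧ ∀ w, S.MemU s w → S.F δ u v ≤ S.F δ w v

/-- `v ∈ argmin { ℱ(u,·) : v ∈ 𝒱, v ≤ vbar }`. -/
def IsVMin (δ : ℝ) (u : Pt → Pt) (vbar v : Pt → ℝ) : Prop :=
  S.MemV v ∧ (∀ x ∈ S.Ω, v x ≤ vbar x) ∧
  ∀ w, S.MemV w → (∀ x ∈ S.Ω, w x ≤ vbar x) → S.F δ u v ≤ S.F δ u w

/-- Phase-field stress `σ(u,v) = 2ψ(v)(μ ε_d(u) + κ ε_v⁺(u)) - 2κ ε_v⁻(u)`. -/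
def stress (u : Pt → Pt) (v : Pt → ℝ) (x : Pt) : Mat := fun i j =>
  2 * ((v x) ^ 2 + S.η) * (S.μ * dev (symGrad u x) i j + S.κ * volP (symGrad u x) i j)
    - 2 * S.κ * volM (symGrad u x) i j

/-- `∂_u ℱ(u,v)[φ] = ∫_Ω σ(u,v) : ε(φ) dx`. -/
def dFu (u : Pt → Pt) (v : Pt → ℝ) (φ : Pt → Pt) : ℝ :=
  ∫ x in S.Ω, matInner (S.stress u v x) (symGrad φ x)

/-- `∂_v ℰ(u,v)[ξ] = ∫_Ω 2 v ξ W₊(ε(u)) dx`. -/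
def dEv (δ : ℝ) (u : Pt → Pt) (v ξ : Pt → ℝ) : ℝ :=
  ∫ x in S.Ω, 2 * v x * ξ x * S.Wplus δ (symGrad u x)

/-- `dℒ(v)[ξ] = ∫_Ω (v-1) ξ + ∇v·∇ξ dx`. -/
def dL (v ξ : Pt → ℝ) : ℝ :=
  ∫ x in S.Ω, (v x - 1) * ξ x + ⟪gradient v x, gradient ξ x⟫

/-- `∂_v ℱ(u,v)[ξ] = ∂_v ℰ(u,v)[ξ] + G_c dℒ(v)[ξ]`. -/
def dFv (δ : ℝ) (u : Pt → Pt) (v ξ : Pt → ℝ) : ℝ := S.dEv δ u v ξ + S.Gc * S.dL v ξ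

/-- Reduced elastic energy `ℰ̃(s,v) = min { ℰ(u,v) : u ∈ 𝒰(s) }`. -/
def redE (δ s : ℝ) (v : Pt → ℝ) : ℝ := sInf {e | ∃ u, S.MemU s u ∧ e = S.E δ u v}

/-- `∂_v ℰ̃(t,v)[ξ] = ∫_Ω v ξ (W₊(ε(u_{t,v})) + δ) dx`, expressed through the elastic
minimizer `u = u_{t,v}` (paper's normalization). -/
def dredE (δ : ℝ) (u : Pt → Pt) (v ξ : Pt → ℝ) : ℝ :=
  ∫ x in S.Ω, v x * ξ x * S.Wplus δ (symGrad u x)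

/-- Maximal energy release rate
`𝒢_max(t,v) = sup { -∂_v ℰ̃(t,v)[ξ] : ξ ∈ Ξ, dℒ(v)[ξ] = 1 }`, expressed through the elastic
minimizer `u = u_{t,v}`. -/
def Gmax (δ : ℝ) (u : Pt → Pt) (v : Pt → ℝ) : ℝ :=
  sSup {g | ∃ ξ, S.MemXi ξ ∧ S.dL v ξ = 1 ∧ g = -(S.dredE δ u v ξ)}

/-- `H¹(Ω)` scalar product. -/
def H1inner (v w : Pt → ℝ) : ℝ :=
  ∫ x in S.Ω, v x * w x + ⟪gradient v x, gradient w x⟫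

/-- Weak `H¹(Ω)` convergence of a sequence. -/
def WeakH1Lim (vn : ℕ → Pt → ℝ) (v : Pt → ℝ) : Prop :=
  ∀ w, S.MemV w → Tendsto (fun n => S.H1inner (vn n) w) atTop (nhds (S.H1inner v w))

end PFSetting

/-- Kuratowski convergence of a sequence of subsets of `ℝ`: the Kuratowski lower limit
`Li A_n = {x : lim dist(x,A_n) = 0}` and upper limit `Ls A_n = {x : liminf dist(x,A_n) = 0}`
coincide with `I`. -/
def IsKuratowskiLimit (A : ℕ → Set ℝ) (I : Set ℝ) : Prop :=
  I = {x | Filter.Tendsto (fun n => Metric.infDist x (A n)) Filter.atTop (nhds 0)} ∧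
  I = {x | Filter.liminf (fun n => Metric.infDist x (A n)) Filter.atTop = 0}

/-!
Test the minimality of `v₁` and `v₂` against their midpoint `m = (v₁ + v₂) / 2`, which is admissible
because the constraint `v ≤ v₀` is convex. The energy is quadratic in `v`, with the `H¹`-coercive
part `G_c ℒ`, so adding `ℱ(u₁, v₁) ≤ ℱ(u₁, m)` and `ℱ(u₂, v₂) ≤ ℱ(u₂, m)` leaves
`(G_c / 4) ‖v₁ - v₂‖²_{H¹}` on one side and the coupling term
`½ ∫ (v₂² - v₁²)(W₊(ε(u₁)) - W₊(ε(u₂))) - ¼ ∫ (W₊(ε(u₁)) + W₊(ε(u₂)))(v₁ - v₂)²` on the other.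
Since `ε ↦ ε_d` and `ε ↦ ε_v⁺` are `1`-Lipschitz and `0 ≤ vᵢ ≤ 1`, Young's inequality bounds it by
`2(μ + κ) |ε(u₁ - u₂)|²`, whence `C² = 32 (μ + κ) / G_c`. The lower bound `vᵢ ≥ 0` holds because
replacing the negative part of `vᵢ` by a differentiable contraction of it strictly lowers `ℱ`.
-/

lemma frobSq_eq (M : Mat) : frobSq M = M 0 0 ^ 2 + M 0 1 ^ 2 + M 1 0 ^ 2 + M 1 1 ^ 2 := by
  simp only [frobSq, Fin.sum_univ_two]; ring

lemma frobSq_nonneg (M : Mat) : 0 ≤ frobSq M := by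
  rw [frobSq_eq]; positivity

lemma frobNorm_sq (M : Mat) : frobNorm M ^ 2 = frobSq M :=
  Real.sq_sqrt (frobSq_nonneg M)

lemma frobNorm_eq_norm (M : Mat) :
    frobNorm M = ‖(WithLp.toLp 2 fun p : Fin 2 × Fin 2 => M p.1 p.2 :
      EuclideanSpace ℝ (Fin 2 × Fin 2))‖ := by
  simp [EuclideanSpace.norm_eq, frobNorm, frobSq, Fintype.sum_prod_type]

lemma abs_frobNorm_sub_frobNorm_le (M N : Mat) : |frobNorm M - frobNorm N| ≤ frobNorm (M - N) := by
  simp only [frobNorm_eq_norm]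
  exact abs_norm_sub_norm_le _ _

lemma mtrace_sub (M N : Mat) : mtrace (M - N) = mtrace M - mtrace N := by
  simp only [mtrace, Pi.sub_apply]; ring

lemma mtrace_sq_le (M : Mat) : mtrace M ^ 2 ≤ 2 * frobSq M := by
  rw [frobSq_eq, mtrace]
  nlinarith [sq_nonneg (M 0 0 - M 1 1), sq_nonneg (M 0 1), sq_nonneg (M 1 0)]

lemma frobSq_dev (M : Mat) : frobSq (dev M) = frobSq M - mtrace M ^ 2 / 2 := by
  simp only [frobSq_eq, dev, idm, mtrace]; norm_num; ring

lemma frobSq_volP (M : Mat) : frobSq (volP M) = max (mtrace M) 0 ^ 2 / 2 := by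
  simp only [frobSq_eq, volP, idm]; norm_num; ring

lemma frobSq_volM (M : Mat) : frobSq (volM M) = max (-mtrace M) 0 ^ 2 / 2 := by
  simp only [frobSq_eq, volM, idm]; norm_num; ring

lemma dev_sub (M N : Mat) : dev (M - N) = dev M - dev N := by
  funext i j; simp only [dev, mtrace_sub, Pi.sub_apply]; ring

lemma frobSq_dev_le (M : Mat) : frobSq (dev M) ≤ frobSq M := by
  rw [frobSq_dev]; nlinarith [sq_nonneg (mtrace M)]

lemma frobSq_volP_le (M : Mat) : frobSq (volP M) ≤ frobSq M := by
  rw [frobSq_volP]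
  have h : |max (mtrace M) 0| ≤ |mtrace M| := by
    simpa using abs_max_sub_max_le_abs (mtrace M) 0 0
  nlinarith [mtrace_sq_le M, sq_le_sq.2 h, sq_abs (mtrace M), sq_abs (max (mtrace M) 0)]

lemma frobSq_volP_sub_le (M N : Mat) : frobSq (volP M - volP N) ≤ frobSq (M - N) := by
  have h : |max (mtrace M) 0 - max (mtrace N) 0| ≤ |mtrace (M - N)| := by
    rw [mtrace_sub]; exact abs_max_sub_max_le_abs _ _ _
  have hsq := sq_le_sq.2 h
  have heq : frobSq (volP M - volP N) = (max (mtrace M) 0 - max (mtrace N) 0) ^ 2 / 2 := by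
    simp only [frobSq_eq, volP, idm, Pi.sub_apply]; norm_num; ring
  rw [heq]
  nlinarith [mtrace_sq_le (M - N), sq_abs (mtrace (M - N)),
    sq_abs (max (mtrace M) 0 - max (mtrace N) 0)]

lemma frobSq_volM_le (M : Mat) : frobSq (volM M) ≤ frobSq M := by
  rw [frobSq_volM]
  have h : |max (-mtrace M) 0| ≤ |mtrace M| := by
    simpa using abs_max_sub_max_le_abs (-mtrace M) 0 0
  nlinarith [mtrace_sq_le M, sq_le_sq.2 h, sq_abs (mtrace M), sq_abs (max (-mtrace M) 0)]

/-- Young's inequality for the factorisation `((b - a)(x + y)) · ((b + a)(x - y))`. -/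
lemma sq_sub_sq_mul_sq_sub_sq_le {a b x y d : ℝ} (hab : (a + b) ^ 2 ≤ 4) (hxy : |x - y| ≤ d) :
    (b ^ 2 - a ^ 2) * (x ^ 2 - y ^ 2) ≤ (a - b) ^ 2 * (x ^ 2 + y ^ 2) / 2 + 4 * d ^ 2 := by
  have hd : (x - y) ^ 2 ≤ d ^ 2 := by
    nlinarith [sq_abs (x - y), abs_nonneg (x - y)]
  have hQ : ((b + a) * (x - y)) ^ 2 ≤ 4 * d ^ 2 := by
    rw [mul_pow]; nlinarith [sq_nonneg (a + b), sq_nonneg (x - y)]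
  have hP : ((b - a) * (x + y)) ^ 2 ≤ 2 * (a - b) ^ 2 * (x ^ 2 + y ^ 2) := by
    rw [mul_pow]; nlinarith [sq_nonneg (a - b), sq_nonneg (x - y)]
  nlinarith [sq_nonneg ((b - a) * (x + y) / 2 - (b + a) * (x - y))]

lemma abs_symGrad_le (u : Pt → Pt) (x : Pt) (i j : Fin 2) :
    |symGrad u x i j| ≤ ‖fderiv ℝ u x‖ := by
  have h : ∀ k l : Fin 2, |fderiv ℝ u x (EuclideanSpace.single l 1) k| ≤ ‖fderiv ℝ u x‖ :=
    fun k l => calc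
      _ ≤ ‖fderiv ℝ u x (EuclideanSpace.single l 1)‖ := by
        simpa using PiLp.norm_apply_le (fderiv ℝ u x (EuclideanSpace.single l 1)) k
      _ ≤ ‖fderiv ℝ u x‖ * ‖EuclideanSpace.single l (1 : ℝ)‖ := (fderiv ℝ u x).le_opNorm _
      _ = ‖fderiv ℝ u x‖ := by simp
  rw [symGrad, abs_div, abs_two]
  linarith [abs_add_le (fderiv ℝ u x (EuclideanSpace.single j 1) i)
    (fderiv ℝ u x (EuclideanSpace.single i 1) j), h i j, h j i]

lemma frobSq_symGrad_le (u : Pt → Pt) (x : Pt) : frobSq (symGrad u x) ≤ 4 * ‖fderiv ℝ u x‖ ^ 2 := by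
  have h : ∀ i j, symGrad u x i j ^ 2 ≤ ‖fderiv ℝ u x‖ ^ 2 := fun i j =>
    sq_le_sq.2 ((abs_symGrad_le u x i j).trans (le_abs_self _))
  rw [frobSq_eq]
  linarith [h 0 0, h 0 1, h 1 0, h 1 1]

lemma symGrad_sub {u₁ u₂ : Pt → Pt} {x : Pt} (h₁ : DifferentiableAt ℝ u₁ x)
    (h₂ : DifferentiableAt ℝ u₂ x) : symGrad (u₁ - u₂) x = symGrad u₁ x - symGrad u₂ x := by
  funext i j
  simp only [symGrad, fderiv_sub h₁ h₂, sub_apply, PiLp.sub_apply, Pi.sub_apply]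
  ring

lemma measurable_symGrad (u : Pt → Pt) : Measurable (symGrad u) := by
  have hΦ : Continuous fun L : Pt →L[ℝ] Pt => fun i j : Fin 2 =>
      (L (EuclideanSpace.single j 1) i + L (EuclideanSpace.single i 1) j) / 2 := by
    fun_prop
  exact hΦ.measurable.comp (measurable_fderiv ℝ u)

lemma norm_gradient_eq (f : Pt → ℝ) (x : Pt) : ‖gradient f x‖ = ‖fderiv ℝ f x‖ :=
  (InnerProductSpace.toDual ℝ Pt).symm.norm_map _

lemma measurable_gradient (f : Pt → ℝ) : Measurable (gradient f) :=
  (InnerProductSpace.toDual ℝ Pt).symm.continuous.measurable.comp (measurable_fderiv ℝ f)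

lemma gradient_sub {f g : Pt → ℝ} {x : Pt} (hf : DifferentiableAt ℝ f x)
    (hg : DifferentiableAt ℝ g x) : gradient (f - g) x = gradient f x - gradient g x := by
  simp only [gradient, fderiv_sub hf hg, map_sub]

lemma gradient_add_div_two {f g : Pt → ℝ} {x : Pt} (hf : DifferentiableAt ℝ f x)
    (hg : DifferentiableAt ℝ g x) :
    gradient (fun y => (f y + g y) / 2) x = (1 / 2 : ℝ) • (gradient f x + gradient g x) := by
  have h : fderiv ℝ (fun y => (f y + g y) / 2) x = (1 / 2 : ℝ) • (fderiv ℝ f x + fderiv ℝ g x) := by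
    simp only [div_eq_inv_mul]
    exact ((hf.hasFDerivAt.add hg.hasFDerivAt).const_mul (2⁻¹ : ℝ)).fderiv.trans (by simp)
  simp only [gradient, h, map_smul, map_add]

/-- A differentiable substitute for the truncation `max · 0`, which would not preserve `MemV`
(its gradients are classical ones). -/
def negShrink (t : ℝ) : ℝ := t / (1 - min t 0)

lemma one_le_one_sub_min (t : ℝ) : 1 ≤ 1 - min t 0 := by
  linarith [min_le_right t 0]

lemma hasDerivAt_negShrink (t : ℝ) : HasDerivAt negShrink (((1 - min t 0) ^ 2)⁻¹) t := by
  have hneg : ∀ s ≤ 0, HasDerivWithinAt negShrink (((1 - min s 0) ^ 2)⁻¹) (Set.Iic 0) s := by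
    intro s hs
    have hs1 : 1 - s ≠ 0 := by linarith
    have h : HasDerivAt (fun r : ℝ => r / (1 - r)) (((1 - s) ^ 2)⁻¹) s :=
      ((hasDerivAt_id' s).div ((hasDerivAt_id' s).const_sub 1) hs1).congr_deriv
        (by field_simp; ring)
    rw [min_eq_left hs]
    exact h.hasDerivWithinAt.congr (fun r (hr : r ≤ 0) => by simp [negShrink, min_eq_left hr])
      (by simp [negShrink, min_eq_left hs])
  have hpos : ∀ s ≥ 0, HasDerivWithinAt negShrink (((1 - min s 0) ^ 2)⁻¹) (Set.Ici 0) s := by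
    intro s hs
    rw [min_eq_right hs, sub_zero, one_pow, inv_one]
    exact (hasDerivAt_id s).hasDerivWithinAt.congr
      (fun r (hr : 0 ≤ r) => by simp [negShrink, min_eq_right hr])
      (by simp [negShrink, min_eq_right hs])
  rcases lt_trichotomy t 0 with ht | rfl | ht
  · exact (hneg t ht.le).hasDerivAt (Iic_mem_nhds ht)
  · simpa [Set.Iic_union_Ici] using (hneg 0 le_rfl).union (hpos 0 le_rfl)
  · exact (hpos t ht.le).hasDerivAt (Ici_mem_nhds ht)

lemma negShrink_of_nonneg {t : ℝ} (ht : 0 ≤ t) : negShrink t = t := by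
  simp [negShrink, min_eq_right ht]

lemma negShrink_mem_Ioo {t : ℝ} (ht : t < 0) : negShrink t ∈ Set.Ioo t 0 := by
  rw [negShrink, min_eq_left ht.le]
  constructor
  · rw [lt_div_iff₀ (by linarith)]; nlinarith
  · exact div_neg_of_neg_of_pos ht (by linarith)

lemma abs_negShrink_le (t : ℝ) : |negShrink t| ≤ |t| := by
  rw [negShrink, abs_div, abs_of_pos (a := 1 - min t 0) (by linarith [one_le_one_sub_min t])]
  exact div_le_self (abs_nonneg t) (one_le_one_sub_min t)

lemma sub_one_sq_negShrink_lt {t : ℝ} (ht : t < 0) : (negShrink t - 1) ^ 2 < (t - 1) ^ 2 := by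
  obtain ⟨h₁, h₂⟩ := negShrink_mem_Ioo ht
  nlinarith

lemma sub_one_sq_negShrink_le (t : ℝ) : (negShrink t - 1) ^ 2 ≤ (t - 1) ^ 2 := by
  rcases lt_or_ge t 0 with ht | ht
  · exact (sub_one_sq_negShrink_lt ht).le
  · rw [negShrink_of_nonneg ht]

lemma norm_gradient_negShrink_comp_le {v : Pt → ℝ} {x : Pt} (hv : DifferentiableAt ℝ v x) :
    ‖gradient (negShrink ∘ v) x‖ ≤ ‖gradient v x‖ := by
  have hφ' : ‖((1 - min (v x) 0) ^ 2)⁻¹‖ ≤ 1 := by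
    rw [norm_inv, norm_pow, Real.norm_eq_abs]
    exact inv_le_one_of_one_le₀ (one_le_pow₀ ((one_le_one_sub_min _).trans (le_abs_self _)))
  rw [norm_gradient_eq, norm_gradient_eq,
    ((hasDerivAt_negShrink (v x)).comp_hasFDerivAt x hv.hasFDerivAt).fderiv, norm_smul]
  exact mul_le_of_le_one_left (norm_nonneg _) hφ'

lemma continuous_negShrink : Continuous negShrink :=
  continuous_iff_continuousAt.2 fun t => (hasDerivAt_negShrink t).continuousAt

namespace PFSetting

variable (S : PFSetting)

instance : IsFiniteMeasure (volume.restrict S.Ω) :=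
  ⟨by rw [Measure.restrict_apply_univ]; exact S.hΩbdd.measure_lt_top⟩

lemma continuous_Wd_zero : Continuous fun p : Mat × ℝ => S.Wd 0 p.1 p.2 := by
  simp only [Wd, Wplus, Wminus, frobSq, dev, volP, volM, mtrace]
  fun_prop

lemma Wplus_zero_nonneg (M : Mat) : 0 ≤ S.Wplus 0 M := by
  have := S.hμ; have := S.hκ; have := frobSq_nonneg (dev M); have := frobSq_nonneg (volP M)
  rw [Wplus]; positivity

lemma Wplus_zero_le (M : Mat) : S.Wplus 0 M ≤ (S.μ + S.κ) * frobSq M := by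
  rw [Wplus, add_zero]
  nlinarith [S.hμ, S.hκ, frobSq_dev_le M, frobSq_volP_le M]

lemma Wd_zero_nonneg (M : Mat) (t : ℝ) : 0 ≤ S.Wd 0 M t := by
  have := S.hη; have := S.hκ; have := S.Wplus_zero_nonneg M; have := frobSq_nonneg (volM M)
  rw [Wd, Wminus]; positivity

lemma Wd_zero_le (M : Mat) (t : ℝ) : S.Wd 0 M t ≤ (t ^ 2 + S.η + 1) * (S.μ + S.κ) * frobSq M := by
  have hW := S.Wplus_zero_le M
  have hB : S.Wminus M ≤ (S.μ + S.κ) * frobSq M := by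
    rw [Wminus]; nlinarith [S.hμ, S.hκ, frobSq_volM_le M, frobSq_nonneg M]
  have hη : 0 ≤ t ^ 2 + S.η := by nlinarith [S.hη]
  rw [Wd]; nlinarith [mul_le_mul_of_nonneg_left hW hη]

/-- `ε ↦ ε_d` and `ε ↦ ε_v⁺` are `1`-Lipschitz for the Frobenius norm, so
`sq_sub_sq_mul_sq_sub_sq_le` applies to both parts of `W₊`. -/
lemma sq_sub_sq_mul_Wplus_sub_le {a b : ℝ} (hab : (a + b) ^ 2 ≤ 4) (M N : Mat) :
    (b ^ 2 - a ^ 2) * (S.Wplus 0 M - S.Wplus 0 N)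
      ≤ (a - b) ^ 2 * (S.Wplus 0 M + S.Wplus 0 N) / 2 + 4 * (S.μ + S.κ) * frobSq (M - N) := by
  have hdev : |frobNorm (dev M) - frobNorm (dev N)| ≤ frobNorm (M - N) :=
    (abs_frobNorm_sub_frobNorm_le _ _).trans <|
      Real.sqrt_le_sqrt <| (dev_sub M N).symm ▸ frobSq_dev_le (M - N)
  have hvol : |frobNorm (volP M) - frobNorm (volP N)| ≤ frobNorm (M - N) :=
    (abs_frobNorm_sub_frobNorm_le _ _).trans (Real.sqrt_le_sqrt (frobSq_volP_sub_le M N))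
  replace hdev := sq_sub_sq_mul_sq_sub_sq_le hab hdev
  replace hvol := sq_sub_sq_mul_sq_sub_sq_le hab hvol
  simp only [frobNorm_sq] at hdev hvol
  simp only [Wplus, add_zero]
  nlinarith [mul_le_mul_of_nonneg_left hdev S.hμ.le, mul_le_mul_of_nonneg_left hvol S.hκ.le]

section

variable {S}

lemma MemW1p.memH1v {p : ℝ} (hp : 2 ≤ p) {u : Pt → Pt} (hu : S.MemW1p p u) : S.MemH1v u := by
  have h2p : (2 : ENNReal) ≤ ENNReal.ofReal p := by simpa using ENNReal.ofReal_le_ofReal hp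
  exact ⟨hu.1, hu.2.1.mono_exponent h2p, hu.2.2.mono_exponent h2p⟩

lemma MemH1v.sub {u₁ u₂ : Pt → Pt} (hu₁ : S.MemH1v u₁) (hu₂ : S.MemH1v u₂) :
    S.MemH1v (u₁ - u₂) := by
  have hD : ∀ {u : Pt → Pt}, S.MemH1v u → MemLp (fderiv ℝ u) 2 (volume.restrict S.Ω) :=
    fun hu => (memLp_norm_iff (measurable_fderiv ℝ _).aestronglyMeasurable).1 hu.2.2
  refine ⟨fun x hx => (hu₁.1 x hx).sub (hu₂.1 x hx), hu₁.2.1.sub hu₂.2.1, ?_⟩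
  refine ((hD hu₁).sub (hD hu₂)).norm.ae_eq ?_
  filter_upwards [self_mem_ae_restrict S.hΩopen.measurableSet] with x hx
  rw [Pi.sub_apply, fderiv_sub (hu₁.1 x hx) (hu₂.1 x hx)]

lemma MemH1v.integrable_sq {u : Pt → Pt} (hu : S.MemH1v u) :
    Integrable (fun x => ‖u x‖ ^ 2 + ‖fderiv ℝ u x‖ ^ 2) (volume.restrict S.Ω) :=
  hu.2.1.norm.integrable_sq.add hu.2.2.integrable_sq

end

lemma integrable_Wd_zero {u : Pt → Pt} (hu : S.MemH1v u) {v : Pt → ℝ} (hv : S.MemV v) :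
    Integrable (fun x => S.Wd 0 (symGrad u x) (v x)) (volume.restrict S.Ω) := by
  obtain ⟨C, hC⟩ := hv.2
  have hmeas : AEStronglyMeasurable (fun x => S.Wd 0 (symGrad u x) (v x)) (volume.restrict S.Ω) :=
    S.continuous_Wd_zero.comp_aestronglyMeasurable
      ((measurable_symGrad u).aestronglyMeasurable.prodMk hv.1.2.1.1)
  refine (hu.2.2.integrable_sq.const_mul (4 * ((C ^ 2 + S.η + 1) * (S.μ + S.κ)))).mono' hmeas ?_
  filter_upwards [self_mem_ae_restrict S.hΩopen.measurableSet] with x hx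
  have hv2 : v x ^ 2 ≤ C ^ 2 := sq_le_sq' (abs_le.1 (hC x hx)).1 (abs_le.1 (hC x hx)).2
  rw [Real.norm_of_nonneg (S.Wd_zero_nonneg _ _)]
  calc S.Wd 0 (symGrad u x) (v x)
      ≤ (v x ^ 2 + S.η + 1) * (S.μ + S.κ) * frobSq (symGrad u x) := S.Wd_zero_le _ _
    _ ≤ (C ^ 2 + S.η + 1) * (S.μ + S.κ) * (4 * ‖fderiv ℝ u x‖ ^ 2) := by
        have := S.hη; have := S.hμ; have := S.hκ
        exact mul_le_mul (by gcongr) (frobSq_symGrad_le u x) (frobSq_nonneg _) (by positivity)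
    _ = _ := by ring

lemma integrable_dissipation {v : Pt → ℝ} (hv : S.MemH1 v) :
    Integrable (fun x => (v x - 1) ^ 2 + ‖gradient v x‖ ^ 2) (volume.restrict S.Ω) :=
  (hv.2.1.sub (memLp_const 1)).integrable_sq.add hv.2.2.integrable_sq

def density (u : Pt → Pt) (v : Pt → ℝ) (x : Pt) : ℝ :=
  S.Wd 0 (symGrad u x) (v x) + S.Gc / 2 * ((v x - 1) ^ 2 + ‖gradient v x‖ ^ 2)

lemma integrable_density {u : Pt → Pt} (hu : S.MemH1v u) {v : Pt → ℝ} (hv : S.MemV v) :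
    Integrable (S.density u v) (volume.restrict S.Ω) :=
  (S.integrable_Wd_zero hu hv).add ((S.integrable_dissipation hv.1).const_mul _)

lemma F_zero_eq_integral_density {u : Pt → Pt} (hu : S.MemH1v u) {v : Pt → ℝ} (hv : S.MemV v) :
    S.F 0 u v = ∫ x in S.Ω, S.density u v x := by
  unfold density
  rw [F, E, L, integral_add (S.integrable_Wd_zero hu hv)
    ((S.integrable_dissipation hv.1).const_mul _), integral_const_mul]
  ring

lemma memV_of_bounded {f : Pt → ℝ} (hdiff : ∀ x ∈ S.Ω, DifferentiableAt ℝ f x)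
    (hmeas : AEStronglyMeasurable f (volume.restrict S.Ω)) (C : ℝ) (hC : ∀ x ∈ S.Ω, |f x| ≤ C)
    {g : Pt → ℝ} (hg : MemLp g 2 (volume.restrict S.Ω)) (hfg : ∀ x ∈ S.Ω, ‖gradient f x‖ ≤ g x) :
    S.MemV f := by
  have hΩ := S.hΩopen.measurableSet
  refine ⟨⟨hdiff, MemLp.of_bound hmeas C ?_, hg.of_le ?_ ?_⟩, C, hC⟩
  · filter_upwards [self_mem_ae_restrict hΩ] with x hx using hC x hx
  · exact (measurable_gradient f).norm.aestronglyMeasurable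
  · filter_upwards [self_mem_ae_restrict hΩ] with x hx
    rw [norm_norm]; exact (hfg x hx).trans (le_abs_self _)

lemma memV_negShrink_comp {v : Pt → ℝ} (hv : S.MemV v) : S.MemV (negShrink ∘ v) := by
  obtain ⟨C, hC⟩ := hv.2
  exact S.memV_of_bounded
    (fun x hx => ((hasDerivAt_negShrink _).comp_hasFDerivAt x (hv.1.1 x hx).hasFDerivAt).differentiableAt)
    (continuous_negShrink.comp_aestronglyMeasurable hv.1.2.1.1) C
    (fun x hx => (abs_negShrink_le _).trans (hC x hx)) hv.1.2.2
    (fun x hx => norm_gradient_negShrink_comp_le (hv.1.1 x hx))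

lemma density_negShrink_comp_add_le (u : Pt → Pt) {v : Pt → ℝ} {x : Pt}
    (hv : DifferentiableAt ℝ v x) :
    S.density u (negShrink ∘ v) x + S.Gc / 2 * ((v x - 1) ^ 2 - (negShrink (v x) - 1) ^ 2)
      ≤ S.density u v x := by
  have hsq : negShrink (v x) ^ 2 ≤ v x ^ 2 := sq_le_sq.2 (abs_negShrink_le _)
  have hgrad : ‖gradient (negShrink ∘ v) x‖ ^ 2 ≤ ‖gradient v x‖ ^ 2 :=
    pow_le_pow_left₀ (norm_nonneg _) (norm_gradient_negShrink_comp_le hv) 2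
  simp only [density, Wd, Function.comp_apply]
  nlinarith [S.hGc, mul_le_mul_of_nonneg_right hsq (S.Wplus_zero_nonneg (symGrad u x))]

lemma ae_nonneg_of_isVMin {u : Pt → Pt} (hu : S.MemH1v u) {v₀ v : Pt → ℝ}
    (hv₀ : ∀ x ∈ S.Ω, 0 ≤ v₀ x) (hv : S.IsVMin 0 u v₀ v) :
    ∀ᵐ x ∂(volume.restrict S.Ω), 0 ≤ v x := by
  obtain ⟨hvV, hvle, hmin⟩ := hv
  have hΩ := S.hΩopen.measurableSet
  have hwV := S.memV_negShrink_comp hvV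
  have hwle : ∀ x ∈ S.Ω, (negShrink ∘ v) x ≤ v₀ x := fun x hx => by
    rcases lt_or_ge (v x) 0 with h | h
    · exact (negShrink_mem_Ioo h).2.le.trans (hv₀ x hx)
    · exact (negShrink_of_nonneg h).trans_le (hvle x hx)
  have hF := hmin _ hwV hwle
  rw [S.F_zero_eq_integral_density hu hvV, S.F_zero_eq_integral_density hu hwV] at hF
  have hgap := fun x hx => S.density_negShrink_comp_add_le u (hvV.1.1 x hx)
  have hle : S.density u (negShrink ∘ v) ≤ᵐ[volume.restrict S.Ω] S.density u v := by
    filter_upwards [self_mem_ae_restrict hΩ] with x hx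
    nlinarith [hgap x hx, S.hGc, sub_one_sq_negShrink_le (v x)]
  have hint_w := S.integrable_density hu hwV
  have hint_v := S.integrable_density hu hvV
  have heq := (integral_eq_iff_of_ae_le hint_w hint_v hle).1
    (le_antisymm (integral_mono_ae hint_w hint_v hle) hF)
  filter_upwards [heq, self_mem_ae_restrict hΩ] with x hx hxΩ
  by_contra! hneg
  nlinarith [hgap x hxΩ, S.hGc, sub_one_sq_negShrink_lt hneg]

lemma memV_midpoint {v₁ v₂ : Pt → ℝ} (hv₁ : S.MemV v₁) (hv₂ : S.MemV v₂) :
    S.MemV (fun x => (v₁ x + v₂ x) / 2) := by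
  obtain ⟨C₁, hC₁⟩ := hv₁.2
  obtain ⟨C₂, hC₂⟩ := hv₂.2
  have hmeas₁ := hv₁.1.2.1.1
  have hmeas₂ := hv₂.1.2.1.1
  refine S.memV_of_bounded (fun x hx => by have := hv₁.1.1 x hx; have := hv₂.1.1 x hx; fun_prop)
    (by fun_prop) ((C₁ + C₂) / 2) (fun x hx => ?_)
    (hv₁.1.2.2.add hv₂.1.2.2) (fun x hx => ?_)
  · rw [abs_div, abs_two]
    linarith [abs_add_le (v₁ x) (v₂ x), hC₁ x hx, hC₂ x hx]
  · rw [gradient_add_div_two (hv₁.1.1 x hx) (hv₂.1.1 x hx), norm_smul, Pi.add_apply]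
    have := norm_add_le (gradient v₁ x) (gradient v₂ x)
    have := norm_nonneg (gradient v₁ x + gradient v₂ x)
    norm_num
    linarith

lemma density_midpoint_gap {u₁ u₂ : Pt → Pt} {v₁ v₂ : Pt → ℝ} {x : Pt}
    (hu₁ : DifferentiableAt ℝ u₁ x) (hu₂ : DifferentiableAt ℝ u₂ x)
    (hv₁ : DifferentiableAt ℝ v₁ x) (hv₂ : DifferentiableAt ℝ v₂ x)
    (h₁ : v₁ x ∈ Set.Icc (0 : ℝ) 1) (h₂ : v₂ x ∈ Set.Icc (0 : ℝ) 1) :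
    S.Gc / 4 * ((v₁ - v₂) x ^ 2 + ‖gradient (v₁ - v₂) x‖ ^ 2)
      ≤ S.density u₁ v₁ x + S.density u₂ v₂ x - S.density u₁ (fun y => (v₁ y + v₂ y) / 2) x
        - S.density u₂ (fun y => (v₁ y + v₂ y) / 2) x
        + 8 * (S.μ + S.κ) * (‖(u₁ - u₂) x‖ ^ 2 + ‖fderiv ℝ (u₁ - u₂) x‖ ^ 2) := by
  have hμκ : 0 ≤ S.μ + S.κ := by linarith [S.hμ, S.hκ]
  have hkey := S.sq_sub_sq_mul_Wplus_sub_le (a := v₁ x) (b := v₂ x)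
    (by nlinarith [h₁.1, h₁.2, h₂.1, h₂.2]) (symGrad u₁ x) (symGrad u₂ x)
  rw [← symGrad_sub hu₁ hu₂] at hkey
  have hD := mul_le_mul_of_nonneg_left (frobSq_symGrad_le (u₁ - u₂) x) hμκ
  have hpar := parallelogram_law_with_norm ℝ (gradient v₁ x) (gradient v₂ x)
  simp only [density, Wd, gradient_add_div_two hv₁ hv₂, gradient_sub hv₁ hv₂, norm_smul,
    Pi.sub_apply]
  have hw := mul_nonneg hμκ (sq_nonneg ‖u₁ x - u₂ x‖)
  norm_num
  linear_combination (1 / 2 : ℝ) * hkey + 2 * hD + 8 * hw + (S.Gc / 4) * hpar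

theorem integral_sq_sub_le_of_isVMin {u₁ u₂ : Pt → Pt} (hu₁ : S.MemH1v u₁) (hu₂ : S.MemH1v u₂)
    {v₀ v₁ v₂ : Pt → ℝ} (hv₀ : ∀ x ∈ S.Ω, 0 ≤ v₀ x ∧ v₀ x ≤ 1)
    (h₁ : S.IsVMin 0 u₁ v₀ v₁) (h₂ : S.IsVMin 0 u₂ v₀ v₂) :
    ∫ x in S.Ω, (v₁ - v₂) x ^ 2 + ‖gradient (v₁ - v₂) x‖ ^ 2
      ≤ 32 * (S.μ + S.κ) / S.Gc * ∫ x in S.Ω, ‖(u₁ - u₂) x‖ ^ 2 + ‖fderiv ℝ (u₁ - u₂) x‖ ^ 2 := by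
  set m : Pt → ℝ := fun x => (v₁ x + v₂ x) / 2
  have hmV : S.MemV m := S.memV_midpoint h₁.1 h₂.1
  have hmle : ∀ x ∈ S.Ω, m x ≤ v₀ x := fun x hx => by
    show (v₁ x + v₂ x) / 2 ≤ v₀ x
    linarith [h₁.2.1 x hx, h₂.2.1 x hx]
  have hF₁ := h₁.2.2 m hmV hmle
  have hF₂ := h₂.2.2 m hmV hmle
  rw [S.F_zero_eq_integral_density hu₁ h₁.1, S.F_zero_eq_integral_density hu₁ hmV] at hF₁
  rw [S.F_zero_eq_integral_density hu₂ h₂.1, S.F_zero_eq_integral_density hu₂ hmV] at hF₂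
  have hpt : ∀ᵐ x ∂(volume.restrict S.Ω),
      S.Gc / 4 * ((v₁ - v₂) x ^ 2 + ‖gradient (v₁ - v₂) x‖ ^ 2)
        ≤ S.density u₁ v₁ x + S.density u₂ v₂ x - S.density u₁ m x - S.density u₂ m x
          + 8 * (S.μ + S.κ) * (‖(u₁ - u₂) x‖ ^ 2 + ‖fderiv ℝ (u₁ - u₂) x‖ ^ 2) := by
    have hv₀' := fun x hx => (hv₀ x hx).1
    filter_upwards [S.ae_nonneg_of_isVMin hu₁ hv₀' h₁, S.ae_nonneg_of_isVMin hu₂ hv₀' h₂,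
      self_mem_ae_restrict S.hΩopen.measurableSet] with x h₁0 h₂0 hx
    exact S.density_midpoint_gap (hu₁.1 x hx) (hu₂.1 x hx) (h₁.1.1.1 x hx) (h₂.1.1.1 x hx)
      ⟨h₁0, (h₁.2.1 x hx).trans (hv₀ x hx).2⟩ ⟨h₂0, (h₂.2.1 x hx).trans (hv₀ x hx).2⟩
  have hd₁ := S.integrable_density hu₁ h₁.1
  have hd₂ := S.integrable_density hu₂ h₂.1
  have hd₁m := S.integrable_density hu₁ hmV
  have hd₂m := S.integrable_density hu₂ hmV
  have hY := (hu₁.sub hu₂).integrable_sq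
  have hRHS : Integrable (fun x => S.density u₁ v₁ x + S.density u₂ v₂ x - S.density u₁ m x
      - S.density u₂ m x + 8 * (S.μ + S.κ) * (‖(u₁ - u₂) x‖ ^ 2 + ‖fderiv ℝ (u₁ - u₂) x‖ ^ 2))
      (volume.restrict S.Ω) :=
    (((hd₁.add hd₂).sub hd₁m).sub hd₂m).add (hY.const_mul _)
  have hint := integral_mono_of_nonneg (ae_of_all _ fun x => by have := S.hGc; positivity) hRHS hpt
  rw [integral_const_mul, integral_add ?_ (hY.const_mul _), integral_sub ?_ hd₂m,
    integral_sub ?_ hd₁m, integral_add hd₁ hd₂, integral_const_mul] at hint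
  · rw [div_mul_eq_mul_div, le_div_iff₀ S.hGc]
    linarith
  exacts [hd₁.add hd₂, (hd₁.add hd₂).sub hd₁m, ((hd₁.add hd₂).sub hd₁m).sub hd₂m]

end PFSetting

theorem stmt4_general (S : PFSetting) (p : ℝ) (hp : 2 < p) :
    ∀ M > (0 : ℝ), ∃ C > (0 : ℝ),
      ∀ u₁ u₂ : Pt → Pt, S.MemW1p p u₁ → S.MemW1p p u₂ →
        S.W1pNorm p u₁ ≤ M → S.W1pNorm p u₂ ≤ M →
        ∀ v₀ : Pt → ℝ, S.MemV v₀ → (∀ x ∈ S.Ω, 0 ≤ v₀ x ∧ v₀ x ≤ 1) →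
        ∀ v₁ v₂ : Pt → ℝ, S.IsVMin 0 u₁ v₀ v₁ → S.IsVMin 0 u₂ v₀ v₂ →
          S.H1norm (v₁ - v₂) ≤ C * S.H1normV (u₁ - u₂) := by
  intro M _
  have hK : 0 < 32 * (S.μ + S.κ) / S.Gc := by
    have := S.hμ; have := S.hκ; have := S.hGc; positivity
  refine ⟨√(32 * (S.μ + S.κ) / S.Gc), Real.sqrt_pos.2 hK, ?_⟩
  intro u₁ u₂ hu₁ hu₂ _ _ v₀ _ hv₀ v₁ v₂ h₁ h₂
  rw [PFSetting.H1norm, PFSetting.H1normV, ← Real.sqrt_mul hK.le]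
  exact Real.sqrt_le_sqrt <|
    S.integral_sq_sub_le_of_isVMin (hu₁.memH1v hp.le) (hu₂.memH1v hp.le) hv₀ h₁ h₂

/-- Lemma 3.8 of the paper.  For every `p ∈ (2,q]` and `M > 0` there is
`C > 0` such that: if `u₁, u₂ ∈ W^{1,p}(Ω;ℝ²)` with norms at most `M`, `v₀ ∈ 𝒱` with
`0 ≤ v₀ ≤ 1`, and `v_i := argmin {ℱ(u_i,v) : v ∈ 𝒱, v ≤ v₀}` for `i = 1,2`, then
`‖v₁ - v₂‖_{H¹} ≤ C ‖u₁ - u₂‖_{H¹}`. -/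
theorem stmt4 (S : PFSetting) (p : ℝ) (hp : 2 < p) (hpq : p ≤ S.q) :
    ∀ M > (0 : ℝ), ∃ C > (0 : ℝ),
      ∀ u₁ u₂ : Pt → Pt, S.MemW1p p u₁ → S.MemW1p p u₂ →
        S.W1pNorm p u₁ ≤ M → S.W1pNorm p u₂ ≤ M →
        ∀ v₀ : Pt → ℝ, S.MemV v₀ → (∀ x ∈ S.Ω, 0 ≤ v₀ x ∧ v₀ x ≤ 1) →
        ∀ v₁ v₂ : Pt → ℝ, S.IsVMin 0 u₁ v₀ v₁ → S.IsVMin 0 u₂ v₀ v₂ →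
          S.H1norm (v₁ - v₂) ≤ C * S.H1normV (u₁ - u₂) :=
  stmt4_general S p hp
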